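/- Let D : [a,b] → ℝ be continuous with D(t) ≥ e for all t, and suppose D(s) ≤ D(r) + C ∫ᵣˢ D(t') log D(t') dt' for all a ≤ r ≤ s ≤ b. Then D(b) ≤ D(a)^{exp(C(b-a))}. -/

import Mathlib

/-!
Let `F(s) = D(a) + C ∫ₐˢ D log D`. Then `D ≤ F`, and since `x ↦ x log x` is increasing on `[1, ∞)`
the envelope satisfies the differential inequality `F' = C D log D ≤ C F log F`. Hence
`log (log F(s)) - C s` is antitone, which integrates to `F(b) ≤ F(a) ^ exp (C (b - a))`,
and `F(a) = D(a)`.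
-/

open Set Real

theorem le_rpow_exp_of_log_log_le {x y c : ℝ} (hx : 1 < x) (hy : 1 < y)
    (h : log (log y) ≤ log (log x) + c) : y ≤ x ^ exp c := by
  have hlog : log y ≤ log x * exp c := by
    calc log y = exp (log (log y)) := (exp_log (log_pos hy)).symm
      _ ≤ exp (log (log x) + c) := exp_le_exp.2 h
      _ = log x * exp c := by rw [exp_add, exp_log (log_pos hx)]
  calc y = exp (log y) := (exp_log (by linarith)).symm
    _ ≤ exp (log x * exp c) := exp_le_exp.2 hlog
    _ = x ^ exp c := (rpow_def_of_pos (by linarith) _).symm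

theorem le_rpow_exp_of_hasDerivAt_le_mul_log {F F' : ℝ → ℝ} {a b C : ℝ} (hab : a ≤ b)
    (hF : ContinuousOn F (Icc a b)) (hF' : ∀ s ∈ Ioo a b, HasDerivAt F (F' s) s)
    (hF'_le : ∀ s ∈ Ioo a b, F' s ≤ C * (F s * log (F s))) (hF_gt : ∀ s ∈ Icc a b, 1 < F s) :
    F b ≤ F a ^ exp (C * (b - a)) := by
  have hlog_pos : ∀ s ∈ Icc a b, 0 < log (F s) := fun s hs => log_pos (hF_gt s hs)
  have hG : ContinuousOn (fun s => log (log (F s)) - C * s) (Icc a b) :=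
    ((hF.log fun s hs => by linarith [hF_gt s hs]).log fun s hs => (hlog_pos s hs).ne').sub
      (continuousOn_const.mul continuousOn_id)
  have hG' : ∀ s ∈ interior (Icc a b),
      HasDerivWithinAt (fun s => log (log (F s)) - C * s)
        (F' s / F s / log (F s) - C) (interior (Icc a b)) s := by
    rw [interior_Icc]
    intro s hs
    have hsI := Ioo_subset_Icc_self hs
    have hlin : HasDerivAt (fun x : ℝ => C * x) C s := by
      simpa using (hasDerivAt_id s).const_mul C
    exact ((((hF' s hs).log (by linarith [hF_gt s hsI])).log (hlog_pos s hsI).ne').sub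
      hlin).hasDerivWithinAt
  have hG'_nonpos : ∀ s ∈ interior (Icc a b), F' s / F s / log (F s) - C ≤ 0 := by
    rw [interior_Icc]
    intro s hs
    have hsI := Ioo_subset_Icc_self hs
    have hpos : 0 < F s * log (F s) := mul_pos (by linarith [hF_gt s hsI]) (hlog_pos s hsI)
    rw [sub_nonpos, div_div, div_le_iff₀ hpos]
    exact hF'_le s hs
  have hanti := antitoneOn_of_hasDerivWithinAt_nonpos (convex_Icc a b) hG hG' hG'_nonpos
    (left_mem_Icc.2 hab) (right_mem_Icc.2 hab) hab
  exact le_rpow_exp_of_log_log_le (hF_gt a (left_mem_Icc.2 hab)) (hF_gt b (right_mem_Icc.2 hab))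
    (by linarith)

theorem hasDerivAt_integral_of_continuousOn {f : ℝ → ℝ} {a b s : ℝ}
    (hf : ContinuousOn f (Icc a b)) (hs : s ∈ Ioo a b) :
    HasDerivAt (fun u => ∫ t in a..u, f t) (f s) s :=
  intervalIntegral.integral_hasDerivAt_right
    ((hf.mono (Icc_subset_Icc le_rfl hs.2.le)).intervalIntegrable_of_Icc hs.1.le)
    ((hf.mono Ioo_subset_Icc_self).stronglyMeasurableAtFilter isOpen_Ioo s hs)
    (hf.continuousAt (Icc_mem_nhds hs.1 hs.2))

theorem continuousOn_integral_of_continuousOn {f : ℝ → ℝ} {a b : ℝ} (hab : a ≤ b)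
    (hf : ContinuousOn f (Icc a b)) : ContinuousOn (fun u => ∫ t in a..u, f t) (Icc a b) := by
  rw [← uIcc_of_le hab] at hf ⊢
  exact intervalIntegral.continuousOn_primitive_interval hf.integrableOn_uIcc

theorem mul_log_le_mul_log {x y : ℝ} (hx : 1 ≤ x) (hxy : x ≤ y) : x * log x ≤ y * log y :=
  mul_le_mul hxy (log_le_log (by linarith) hxy) (log_nonneg hx) (by linarith)

theorem stmt5 (a b C : ℝ) (hab : a < b) (hC : 0 < C) (D : ℝ → ℝ)
    (hcont : ContinuousOn D (Set.Icc a b))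
    (hD : ∀ t ∈ Set.Icc a b, Real.exp 1 ≤ D t)
    (hineq : ∀ r ∈ Set.Icc a b, ∀ s ∈ Set.Icc a b, r ≤ s →
      D s ≤ D r + C * ∫ t in r..s, D t * Real.log (D t)) :
    D b ≤ D a ^ Real.exp (C * (b - a)) := by
  have haI : a ∈ Icc a b := left_mem_Icc.2 hab.le
  have hD_gt : ∀ t ∈ Icc a b, 1 < D t := fun t ht =>
    (one_lt_exp_iff.2 one_pos).trans_le (hD t ht)
  have hg : ContinuousOn (fun t => D t * log (D t)) (Icc a b) :=
    hcont.mul (hcont.log fun t ht => by linarith [hD_gt t ht])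
  set F : ℝ → ℝ := fun s => D a + C * ∫ t in a..s, D t * log (D t) with hF
  have hDF : ∀ s ∈ Icc a b, D s ≤ F s := fun s hs => hineq a haI s hs hs.1
  have hF_cont : ContinuousOn F (Icc a b) :=
    continuousOn_const.add
      (continuousOn_const.mul (continuousOn_integral_of_continuousOn hab.le hg))
  have hF' : ∀ s ∈ Ioo a b, HasDerivAt F (C * (D s * log (D s))) s := fun s hs =>
    ((hasDerivAt_integral_of_continuousOn hg hs).const_mul C).const_add _
  have hF'_le : ∀ s ∈ Ioo a b, C * (D s * log (D s)) ≤ C * (F s * log (F s)) := fun s hs =>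
    mul_le_mul_of_nonneg_left (mul_log_le_mul_log (hD_gt s (Ioo_subset_Icc_self hs)).le
      (hDF s (Ioo_subset_Icc_self hs))) hC.le
  calc D b ≤ F b := hDF b (right_mem_Icc.2 hab.le)
    _ ≤ F a ^ exp (C * (b - a)) := le_rpow_exp_of_hasDerivAt_le_mul_log hab.le hF_cont hF' hF'_le
        fun s hs => (hD_gt s hs).trans_le (hDF s hs)
    _ = D a ^ exp (C * (b - a)) := by simp [hF]
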